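/- arXiv:2412.04586 — 2 statements merged into one kernel-verified Lean document; each statement's English description precedes it below -/
import Mathlib

section
/- Let n ≥ 1 and k ≥ 0 be integers and x > 0. Then ψ(x)·P''_{n,k}(x) = T_{n,k}(x)·P_{n,k}(x), where P''_{n,k} is the second derivative of P_{n,k}. -/
open MeasureTheory Filter Set

/-- Baskakov basis functions `P_{n,k}(x)`, with `P_{n,k} := 0` for `k < 0`. -/
noncomputable def P (n : ℕ) (k : ℤ) (x : ℝ) : ℝ :=
  if k < 0 then 0
  else (Nat.choose (n + k.toNat - 1) k.toNat : ℝ) * x ^ k.toNat * (1 + x) ^ (-(n : ℤ) - k)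

/-- The weight `ψ(x) = x(1+x)`. -/
noncomputable def psi (x : ℝ) : ℝ := x * (1 + x)

/-- The differential operator `D̃ f = ψ f''`. -/
noncomputable def Dt (f : ℝ → ℝ) : ℝ → ℝ := fun x => psi x * deriv (deriv f) x

/-- The functionals `v_{n,k}`. -/
noncomputable def v (n k : ℕ) (f : ℝ → ℝ) : ℝ :=
  if k = 0 then f 0
  else ((n : ℝ) + 1) * ∫ t in Set.Ioi (0 : ℝ), P (n + 2) ((k : ℤ) - 1) t * f t

/-- The Goodman–Sharma–Baskakov operator `V_n`. -/
noncomputable def V (n : ℕ) (f : ℝ → ℝ) (x : ℝ) : ℝ :=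
  ∑' k : ℕ, v n k f * P n (k : ℤ) x

/-- The modified operator `Ṽ_n`. -/
noncomputable def Vt (n : ℕ) (f : ℝ → ℝ) (x : ℝ) : ℝ :=
  ∑' k : ℕ, v n k f * (P n (k : ℤ) x - (1 / (n : ℝ)) * Dt (P n (k : ℤ)) x)

/-- Supremum norm on `[0,∞)`. -/
noncomputable def supNorm (f : ℝ → ℝ) : ℝ := ⨆ x ∈ Set.Ici (0 : ℝ), |f x|

/-- `f` is bounded and continuous on `[0,∞)`. -/
def BddContOn (f : ℝ → ℝ) : Prop :=
  ContinuousOn f (Set.Ici 0) ∧ ∃ M, ∀ x ∈ Set.Ici (0 : ℝ), |f x| ≤ M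

/-- The space `W²(ψ)`: `g, g'` (locally) differentiable on `(0,∞)` and `D̃ g` bounded. -/
def MemW2 (g : ℝ → ℝ) : Prop :=
  DifferentiableOn ℝ g (Set.Ioi 0) ∧ DifferentiableOn ℝ (deriv g) (Set.Ioi 0) ∧
    ∃ M, ∀ x ∈ Set.Ioi (0 : ℝ), |Dt g x| ≤ M

/-- The space `W²₀(ψ)`: members of `W²(ψ)` with `D̃ g(x) → 0` as `x → 0⁺`. -/
def MemW20 (g : ℝ → ℝ) : Prop :=
  MemW2 g ∧ Filter.Tendsto (Dt g) (nhdsWithin 0 (Set.Ioi 0)) (nhds 0)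

/-- The K-functional `K(f,t)`. -/
noncomputable def Kfun (f : ℝ → ℝ) (t : ℝ) : ℝ :=
  sInf {a : ℝ | ∃ g : ℝ → ℝ, MemW20 g ∧ MemW2 (Dt g) ∧
    a = supNorm (fun x => f x - g x) + t * supNorm (Dt (Dt g))}

/-- The function `T_{n,k}(x)`. -/
noncomputable def T (n : ℕ) (k : ℤ) (x : ℝ) : ℝ :=
  (k : ℝ) * ((k : ℝ) - 1) * (1 + x) / x - 2 * (k : ℝ) * ((n : ℝ) + (k : ℝ))
    + ((n : ℝ) + (k : ℝ)) * ((n : ℝ) + (k : ℝ) + 1) * x / (1 + x)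

/-!
The basis function `P_{n,k}` is a constant multiple of `x ^ k * (1 + x) ^ (-(n + k))`.
For `f = x ^ a * (1 + x) ^ b` the logarithmic derivative is `a / x + b / (1 + x)`, so
`f'' = (a (a - 1) / x ^ 2 + 2 a b / (x (1 + x)) + b (b - 1) / (1 + x) ^ 2) f`;
multiplying by `ψ = x (1 + x)` and putting `a = k`, `b = -(n + k)` gives `T_{n,k}`.
-/

open Topology

noncomputable def zpowMulOneAddZpow (a b : ℤ) (y : ℝ) : ℝ := y ^ a * (1 + y) ^ b

section zpowMulOneAddZpow

variable {y : ℝ}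

theorem zpowMulOneAddZpow_sub_one_left (a b : ℤ) (hy : y ≠ 0) :
    zpowMulOneAddZpow (a - 1) b y = zpowMulOneAddZpow a b y / y := by
  rw [zpowMulOneAddZpow, zpowMulOneAddZpow, zpow_sub_one₀ hy]
  ring

theorem zpowMulOneAddZpow_sub_one_right (a b : ℤ) (hy₁ : 1 + y ≠ 0) :
    zpowMulOneAddZpow a (b - 1) y = zpowMulOneAddZpow a b y / (1 + y) := by
  rw [zpowMulOneAddZpow, zpowMulOneAddZpow, zpow_sub_one₀ hy₁]
  ring

theorem hasDerivAt_zpowMulOneAddZpow (a b : ℤ) (hy : y ≠ 0) (hy₁ : 1 + y ≠ 0) :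
    HasDerivAt (zpowMulOneAddZpow a b)
      (a * zpowMulOneAddZpow (a - 1) b y + b * zpowMulOneAddZpow a (b - 1) y) y := by
  have hb : HasDerivAt (fun z : ℝ => (1 + z) ^ b) (b * (1 + y) ^ (b - 1) * 1) y :=
    (hasDerivAt_zpow b (1 + y) (Or.inl hy₁)).comp y ((hasDerivAt_id y).const_add 1)
  refine ((hasDerivAt_zpow a y (Or.inl hy)).mul hb).congr_deriv ?_
  unfold zpowMulOneAddZpow
  ring

theorem deriv_zpowMulOneAddZpow_eventuallyEq (a b : ℤ) (hy : y ≠ 0) (hy₁ : 1 + y ≠ 0) :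
    deriv (zpowMulOneAddZpow a b) =ᶠ[𝓝 y]
      fun z => a * zpowMulOneAddZpow (a - 1) b z + b * zpowMulOneAddZpow a (b - 1) z := by
  have hy₁' : ∀ᶠ z in 𝓝 y, 1 + z ≠ 0 :=
    (continuous_const.add continuous_id).continuousAt.eventually_ne hy₁
  filter_upwards [eventually_ne_nhds hy, hy₁'] with z hz hz₁
  exact (hasDerivAt_zpowMulOneAddZpow a b hz hz₁).deriv

theorem deriv_deriv_zpowMulOneAddZpow (a b : ℤ) (hy : y ≠ 0) (hy₁ : 1 + y ≠ 0) :
    deriv (deriv (zpowMulOneAddZpow a b)) y =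
      a * (a - 1) * zpowMulOneAddZpow (a - 1 - 1) b y
        + 2 * a * b * zpowMulOneAddZpow (a - 1) (b - 1) y
        + b * (b - 1) * zpowMulOneAddZpow a (b - 1 - 1) y := by
  rw [(deriv_zpowMulOneAddZpow_eventuallyEq a b hy hy₁).deriv_eq,
    (((hasDerivAt_zpowMulOneAddZpow (a - 1) b hy hy₁).const_mul (a : ℝ)).fun_add
      ((hasDerivAt_zpowMulOneAddZpow a (b - 1) hy hy₁).const_mul (b : ℝ))).deriv]
  push_cast
  ring

theorem psi_mul_deriv_deriv_zpowMulOneAddZpow (a b : ℤ) (hy : y ≠ 0) (hy₁ : 1 + y ≠ 0) :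
    psi y * deriv (deriv (zpowMulOneAddZpow a b)) y =
      (a * (a - 1) * (1 + y) / y + 2 * a * b + b * (b - 1) * y / (1 + y))
        * zpowMulOneAddZpow a b y := by
  rw [deriv_deriv_zpowMulOneAddZpow a b hy hy₁]
  simp only [zpowMulOneAddZpow_sub_one_left _ _ hy,
    zpowMulOneAddZpow_sub_one_right _ _ hy₁, psi]
  field_simp

end zpowMulOneAddZpow

theorem P_natCast_eq (n k : ℕ) :
    P n k = fun y => (n + k - 1).choose k * zpowMulOneAddZpow k (-(n : ℤ) - k) y := by
  ext y
  rw [P, if_neg (Int.natCast_nonneg k).not_gt, zpowMulOneAddZpow, Int.toNat_natCast,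
    zpow_natCast, mul_assoc]

theorem Dt_P_eq_T_mul_P_general (n : ℕ) (k : ℕ) (x : ℝ) (hx : 0 < x) :
    psi x * deriv (deriv (P n (k : ℤ))) x = T n (k : ℤ) x * P n (k : ℤ) x := by
  simp only [P_natCast_eq, deriv_const_mul_field']
  rw [mul_left_comm, psi_mul_deriv_deriv_zpowMulOneAddZpow _ _ hx.ne' (by positivity), T]
  push_cast
  ring

theorem Dt_P_eq_T_mul_P (n : ℕ) (hn : 1 ≤ n) (k : ℕ) (x : ℝ) (hx : 0 < x) :
    psi x * deriv (deriv (P n (k : ℤ))) x = T n (k : ℤ) x * P n (k : ℤ) x :=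
  Dt_P_eq_T_mul_P_general n k x hx
end

section
/- Let n ≥ 1 be an integer, x > 0, and α ∈ ℝ. Then Σ_{k=0}^∞ (α − T_{n,k}(x)/n)² · P_{n,k}(x) = α² + 2 + 2/n. -/
open MeasureTheory Filter Set

/-!
Since `P_{n,k}'/P_{n,k} = k/x - (n+k)/(1+x)`, one has `T_{n,k} = ψ P_{n,k}''/P_{n,k}`, and
`ψ T_{n,k}(x) = k(k-1) - 2(n+1)x k + n(n+1)x²` is quadratic in `k`. The recursion
`k P_{n,k} = n x P_{n+1,k-1}` gives the factorial moments
`∑ₖ k(k-1)⋯(k-r+1) P_{n,k}(x) = n(n+1)⋯(n+r-1) xʳ`, from which `∑ₖ T_{n,k} P_{n,k} = 0` and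
`∑ₖ T_{n,k}² P_{n,k} = 2n(n+1)`. Expanding the square then gives `α² + 2 + 2/n`.
-/

lemma P_of_neg (n : ℕ) {k : ℤ} (hk : k < 0) (x : ℝ) : P n k x = 0 := if_pos hk

lemma P_natCast (n k : ℕ) (x : ℝ) :
    P n k x = (n + k - 1).choose k * x ^ k * (1 + x) ^ (-(n : ℤ) - k) := by
  simp [P]

lemma intCast_mul_P (n : ℕ) (k : ℤ) (x : ℝ) :
    (k : ℝ) * P n k x = n * x * P (n + 1) (k - 1) x := by
  obtain hk | rfl | hk := lt_trichotomy k 0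
  · rw [P_of_neg n hk, P_of_neg _ (by omega)]; ring
  · rw [P_of_neg (n + 1) (show (0 : ℤ) - 1 < 0 by norm_num)]; simp
  obtain ⟨j, rfl⟩ : ∃ j : ℕ, k = j + 1 := ⟨(k - 1).toNat, by omega⟩
  have hchoose : ((n + j).choose (j + 1) * (j + 1) : ℝ) = (n + j).choose j * n := by
    have h := Nat.choose_succ_right_eq (n + j) j
    rw [Nat.add_sub_cancel] at h
    exact_mod_cast h
  rw [show (j : ℤ) + 1 = ((j + 1 : ℕ) : ℤ) by push_cast; ring, P_natCast,
    show ((j + 1 : ℕ) : ℤ) - 1 = (j : ℕ) by push_cast; ring, P_natCast,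
    show n + (j + 1) - 1 = n + j by omega, show n + 1 + j - 1 = n + j by omega,
    show -(n : ℤ) - ((j + 1 : ℕ) : ℤ) = -((n + 1 : ℕ) : ℤ) - j by push_cast; ring]
  push_cast
  linear_combination x ^ (j + 1) * (1 + x) ^ (-((n : ℤ) + 1) - j) * hchoose

lemma descPochhammer_eval_mul_P (r n : ℕ) (k : ℤ) (x : ℝ) :
    (descPochhammer ℝ r).eval (k : ℝ) * P n k x
      = (ascPochhammer ℝ r).eval (n : ℝ) * x ^ r * P (n + r) (k - r) x := by
  induction r with
  | zero => simp
  | succ r ih =>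
    have hstep := intCast_mul_P (n + r) (k - r) x
    push_cast at hstep
    rw [descPochhammer_succ_eval, ascPochhammer_succ_eval,
      show n + (r + 1) = n + r + 1 by omega, show k - ((r + 1 : ℕ) : ℤ) = k - r - 1 by push_cast; ring]
    linear_combination ((k : ℝ) - r) * ih + (ascPochhammer ℝ r).eval (n : ℝ) * x ^ r * hstep

lemma hasSum_P (m : ℕ) (hm : 0 < m) {x : ℝ} (hx : 0 ≤ x) :
    HasSum (fun k : ℕ => P m k x) 1 := by
  obtain ⟨m, rfl⟩ : ∃ m', m = m' + 1 := ⟨m - 1, by omega⟩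
  have hx1 : 0 < 1 + x := by linarith
  have hq : ‖x / (1 + x)‖ < 1 := by
    rw [Real.norm_eq_abs, abs_of_nonneg (by positivity), div_lt_one hx1]; linarith
  have hgeom := (hasSum_choose_mul_geometric_of_norm_lt_one m hq).mul_right
    ((1 + x) ^ (-((m + 1 : ℕ) : ℤ)))
  have hterm : ∀ k : ℕ, P (m + 1) k x
      = (k + m).choose m * (x / (1 + x)) ^ k * (1 + x) ^ (-((m + 1 : ℕ) : ℤ)) := fun k => by
    rw [P_natCast, ← Nat.choose_symm_add, show m + 1 + k - 1 = k + m by omega,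
      show -((m + 1 : ℕ) : ℤ) - k = -((m + 1 + k : ℕ) : ℤ) by push_cast; ring,
      zpow_neg, zpow_natCast, zpow_neg, zpow_natCast, div_pow, pow_add, mul_inv]
    ring
  have hsum : 1 / (1 - x / (1 + x)) ^ (m + 1) * (1 + x) ^ (-((m + 1 : ℕ) : ℤ)) = 1 := by
    rw [show (1 : ℝ) - x / (1 + x) = (1 + x)⁻¹ by field_simp; ring, zpow_neg, zpow_natCast,
      inv_pow, one_div, inv_inv, mul_inv_cancel₀ (by positivity)]
  simpa only [hterm, hsum] using hgeom

lemma hasSum_P_sub (m r : ℕ) (hm : 0 < m) {x : ℝ} (hx : 0 ≤ x) :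
    HasSum (fun k : ℕ => P m (k - r) x) 1 := by
  have h := (hasSum_nat_add_iff (f := fun k : ℕ => P m (k - r) x) r).mp
    (by simpa using hasSum_P m hm hx)
  rwa [Finset.sum_eq_zero fun i hi => P_of_neg m (by simp at hi; omega) x, add_zero] at h

lemma hasSum_descPochhammer_mul_P (n r : ℕ) (hn : 0 < n) {x : ℝ} (hx : 0 ≤ x) :
    HasSum (fun k : ℕ => (descPochhammer ℝ r).eval (k : ℝ) * P n k x)
      ((ascPochhammer ℝ r).eval (n : ℝ) * x ^ r) := by
  have h := (hasSum_P_sub (n + r) r (by omega) hx).mul_left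
    ((ascPochhammer ℝ r).eval (n : ℝ) * x ^ r)
  rw [mul_one] at h
  have hterm (k : ℕ) := descPochhammer_eval_mul_P r n k x
  simpa only [Int.cast_natCast, ← hterm] using h

lemma T_eq_div_psi (n : ℕ) (k : ℤ) {x : ℝ} (hx₀ : x ≠ 0) (hx₁ : 1 + x ≠ 0) :
    T n k x = (k * (k - 1) - 2 * (n + 1) * x * k + n * (n + 1) * x ^ 2) / psi x := by
  rw [T, psi]
  field_simp
  ring

lemma hasSum_T_mul_P {n : ℕ} (hn : 0 < n) {x : ℝ} (hx : 0 < x) :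
    HasSum (fun k : ℕ => T n k x * P n k x) 0 := by
  have hm (r : ℕ) := hasSum_descPochhammer_mul_P n r hn hx.le
  have h := (((hm 2).sub ((hm 1).mul_left (2 * (n + 1) * x))).add
    ((hm 0).mul_left (n * (n + 1) * x ^ 2))).div_const (psi x)
  convert h using 1
  · rfl
  · funext k
    rw [T_eq_div_psi n k hx.ne' (by positivity)]
    simp only [descPochhammer_succ_eval, descPochhammer_zero, Polynomial.eval_one,
      Int.cast_natCast, Nat.cast_one, Nat.cast_zero]
    ring
  · simp only [ascPochhammer_succ_eval, ascPochhammer_zero, Polynomial.eval_one, Nat.cast_one,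
      Nat.cast_zero]
    rw [psi]
    ring

lemma hasSum_T_sq_mul_P {n : ℕ} (hn : 0 < n) {x : ℝ} (hx : 0 < x) :
    HasSum (fun k : ℕ => T n k x ^ 2 * P n k x) (2 * n * (n + 1)) := by
  have hm (r : ℕ) := hasSum_descPochhammer_mul_P n r hn hx.le
  set a : ℝ := 2 * (n + 1) * x
  set c : ℝ := n * (n + 1) * x ^ 2
  -- With `dᵣ = k(k-1)⋯(k-r+1)`, `ψ T = d₂ - a d₁ + c`; its square is expanded in the `dᵣ` via
  -- `d₂² = d₄ + 4 d₃ + 2 d₂`, `k d₂ = d₃ + 2 d₂`, `k² = d₂ + d₁`.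
  have h := (((((hm 4).add ((hm 3).mul_left (4 - 2 * a))).add
    ((hm 2).mul_left (2 - 4 * a + a ^ 2 + 2 * c))).add ((hm 1).mul_left (a ^ 2 - 2 * a * c))).add
    ((hm 0).mul_left (c ^ 2))).div_const (psi x ^ 2)
  convert h using 1
  · rfl
  · funext k
    rw [T_eq_div_psi n k hx.ne' (by positivity)]
    simp only [descPochhammer_succ_eval, descPochhammer_zero, Polynomial.eval_one,
      Int.cast_natCast, Nat.cast_ofNat, Nat.cast_one, Nat.cast_zero]
    ring
  · simp only [ascPochhammer_succ_eval, ascPochhammer_zero, Polynomial.eval_one, Nat.cast_ofNat,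
      Nat.cast_one, Nat.cast_zero]
    rw [psi]
    field_simp
    ring

theorem Phi_eval (n : ℕ) (hn : 1 ≤ n) (x : ℝ) (hx : 0 < x) (α : ℝ) :
    ∑' k : ℕ, (α - T n (k : ℤ) x / (n : ℝ)) ^ 2 * P n (k : ℤ) x
      = α ^ 2 + 2 + 2 / (n : ℝ) := by
  have hsum := (((hasSum_P n hn hx.le).mul_left (α ^ 2)).sub
    ((hasSum_T_mul_P hn hx).mul_left (2 * α / n))).add
    ((hasSum_T_sq_mul_P hn hx).mul_left (1 / (n : ℝ) ^ 2))
  have hn' : (n : ℝ) ≠ 0 := by positivity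
  convert hsum.tsum_eq using 1
  · congr 1
    funext k
    field_simp
    ring
  · field_simp
    ring
end
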